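/- (Equivalence Neumann → Dirichlet.) Assume α₂ > α₃ and q₀ > q₂. Let λ₁ > z₀ be the unique solution of the reduced Neumann system, i.e. Q(λ₁) = P(λ₂) where λ₂ ≥ 0 satisfies erf(λ₂·√(α₁/α₂)) = H(λ₁). Define A := B + (q₀·√(π·α₃)/k₃)·erf(λ₂·√(α₁/α₃)). Then A > B and Q(λ₁) = V(λ₂), where V is the Dirichlet function built from this A; consequently λ₁ coincides with the unique solution μ₁ > z₀ of the reduced Dirichlet system with data A, and λ₂ = μ₂. -/

import Mathlib

noncomputable section

/-- The error function `erf x = (2/√π) ∫₀ˣ exp(−s²) ds`. -/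
def erf (x : ℝ) : ℝ := (2 / Real.sqrt Real.pi) * ∫ s in (0:ℝ)..x, Real.exp (-(s^2))

/-- The complementary error function. -/
def erfc (x : ℝ) : ℝ := 1 - erf x

/-- Physical data of the three-phase Stefan problem: positive thermal conductivities,
specific heats, mass density, latent heats, and temperatures `B > C > D`. -/
structure Params where
  k₁ : ℝ
  k₂ : ℝ
  k₃ : ℝ
  c₁ : ℝ
  c₂ : ℝ
  c₃ : ℝ
  ρ : ℝ
  ℓ₁ : ℝ
  ℓ₂ : ℝ
  B : ℝ
  C : ℝ
  D : ℝ
  hk₁ : 0 < k₁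
  hk₂ : 0 < k₂
  hk₃ : 0 < k₃
  hc₁ : 0 < c₁
  hc₂ : 0 < c₂
  hc₃ : 0 < c₃
  hρ : 0 < ρ
  hℓ₁ : 0 < ℓ₁
  hℓ₂ : 0 < ℓ₂
  hBC : C < B
  hCD : D < C

namespace Params

/-- Thermal diffusivity of phase 1. -/
def α₁ (p : Params) : ℝ := p.k₁ / (p.ρ * p.c₁)

/-- Thermal diffusivity of phase 2. -/
def α₂ (p : Params) : ℝ := p.k₂ / (p.ρ * p.c₂)

/-- Thermal diffusivity of phase 3. -/
def α₃ (p : Params) : ℝ := p.k₃ / (p.ρ * p.c₃)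

/-- Stefan number `Ste₁ = c₁(C−D)/ℓ₁`. -/
def Ste₁ (p : Params) : ℝ := p.c₁ * (p.C - p.D) / p.ℓ₁

/-- Stefan number `Ste₂ = c₂(B−C)/ℓ₂`. -/
def Ste₂ (p : Params) : ℝ := p.c₂ * (p.B - p.C) / p.ℓ₂

/-- `φ(z) = z + (Ste₁/√π) exp(−z²)/erfc(z)`. -/
def φ (p : Params) (z : ℝ) : ℝ :=
  z + (p.Ste₁ / Real.sqrt Real.pi) * Real.exp (-(z^2)) / erfc z

/-- `H(z) = erf(z√(α₁/α₂)) − (Ste₂/√π)(ℓ₂/ℓ₁)√(k₂c₁/(k₁c₂)) exp(−z²α₁/α₂)/φ(z)`. -/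
def H (p : Params) (z : ℝ) : ℝ :=
  erf (z * Real.sqrt (p.α₁ / p.α₂)) -
    (p.Ste₂ / Real.sqrt Real.pi) * (p.ℓ₂ / p.ℓ₁) *
      Real.sqrt (p.k₂ * p.c₁ / (p.k₁ * p.c₂)) *
      (Real.exp (-(z^2) * (p.α₁ / p.α₂)) / p.φ z)

/-- `Q(z) = (ℓ₁/ℓ₂) φ(z) exp(z² α₁/α₂)`. -/
def Q (p : Params) (z : ℝ) : ℝ :=
  (p.ℓ₁ / p.ℓ₂) * p.φ z * Real.exp (z^2 * (p.α₁ / p.α₂))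

/-- The function `T` arising from the Robin (convective) boundary condition with
heat-transfer coefficient `h₀` and bulk temperature `Ainf`. -/
def T (p : Params) (h₀ Ainf : ℝ) (z : ℝ) : ℝ :=
  (p.Ste₂ / (Real.sqrt Real.pi * p.c₂)) * ((Ainf - p.B) / (p.B - p.C)) *
    Real.sqrt (p.k₃ * p.c₁ * p.c₃ / p.k₁) *
    (Real.exp (-(z^2) * p.α₁ * (1 / p.α₃ - 1 / p.α₂)) /
      (p.k₃ / (h₀ * Real.sqrt (Real.pi * p.α₃)) + erf (z * Real.sqrt (p.α₁ / p.α₃)))) -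
  z * Real.exp (z^2 * (p.α₁ / p.α₂))

/-- The function `V` arising from the Dirichlet boundary condition with temperature `A`. -/
def V (p : Params) (A : ℝ) (z : ℝ) : ℝ :=
  ((A - p.B) / p.ℓ₂) * Real.sqrt (p.c₁ * p.c₃ * p.k₃ / (Real.pi * p.k₁)) *
    (Real.exp (-(z^2) * (p.α₁ / p.α₃ - p.α₁ / p.α₂)) / erf (z * Real.sqrt (p.α₁ / p.α₃))) -
  z * Real.exp (z^2 * (p.α₁ / p.α₂))

/-- The function `P` arising from the Neumann boundary condition with flux coefficient `q₀`. -/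
def P (p : Params) (q₀ : ℝ) (z : ℝ) : ℝ :=
  Real.exp (z^2 * (p.α₁ / p.α₂)) *
    (-z + (q₀ / p.ℓ₂) * Real.sqrt (p.c₁ / (p.ρ * p.k₁)) * Real.exp (-(z^2) * (p.α₁ / p.α₃)))

/-- Critical heat-transfer coefficient `h₂`. -/
def h2 (p : Params) (Ainf z₀ : ℝ) : ℝ :=
  ((p.B - p.C) / (Ainf - p.B)) *
    Real.sqrt (p.k₂ * p.k₃ * p.c₂ / (Real.pi * p.c₃ * p.α₃)) *
    (1 / erf (z₀ * Real.sqrt (p.α₁ / p.α₂)))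

/-- Critical heat-flux coefficient `q₂`. -/
def q2 (p : Params) (z₀ : ℝ) : ℝ :=
  p.k₂ * (p.B - p.C) / (Real.sqrt (p.α₂ * Real.pi) * erf (z₀ * Real.sqrt (p.α₁ / p.α₂)))

end Params

/-! Substituting the Neumann data `A` into `V` turns `V(λ₂)` into `P(λ₂)` identically, so
`(λ₁, λ₂)` solves the Dirichlet system. For uniqueness, the constraint
`erf(μ₂√(α₁/α₂)) = H(μ₁)` makes `μ₂` increase with `μ₁` because `H` is increasing, while `Q`
increases and `V` decreases; hence `Q(μ₁) = V(μ₂)` has at most one solution. The monotonicity of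
`H` and `Q` comes from that of the Mills ratio `exp(-z²)/erfc z`, i.e. from
`exp(z²)·erfc z = (2/√π)∫₀^∞ exp(-2zt - t²) dt` being decreasing in `z`. -/

open Real MeasureTheory Set

section ErrorFunction

lemma integrable_exp_neg_sq : Integrable fun s : ℝ => exp (-s ^ 2) := by
  simpa using integrable_exp_neg_mul_sq (b := 1) one_pos

lemma erf_zero : erf 0 = 0 := by simp [erf]

lemma erf_strictMono : StrictMono erf := by
  intro x y hxy
  have hsplit := intervalIntegral.integral_add_adjacent_intervals
    (integrable_exp_neg_sq.intervalIntegrable (a := 0) (b := x))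
    (integrable_exp_neg_sq.intervalIntegrable (b := y))
  have hpos : 0 < ∫ s in x..y, exp (-s ^ 2) :=
    intervalIntegral.intervalIntegral_pos_of_pos_on integrable_exp_neg_sq.intervalIntegrable
      (fun _ _ => exp_pos _) hxy
  unfold erf
  gcongr
  linarith

lemma erf_pos {x : ℝ} (hx : 0 < x) : 0 < erf x := erf_zero ▸ erf_strictMono hx

lemma erf_ne_zero {x : ℝ} (hx : x ≠ 0) : erf x ≠ 0 := erf_zero ▸ erf_strictMono.injective.ne hx

lemma erfc_eq_integral_Ioi (z : ℝ) :
    erfc z = 2 / √π * ∫ s in Ioi z, exp (-s ^ 2) := by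
  have h := intervalIntegral.integral_Ioi_sub_Ioi' (a := 0) (b := z)
    integrable_exp_neg_sq.integrableOn integrable_exp_neg_sq.integrableOn
  have hhalf : ∫ s in Ioi (0 : ℝ), exp (-s ^ 2) = √π / 2 := by
    simpa using integral_gaussian_Ioi 1
  have hπ : √π ≠ 0 := (sqrt_pos.2 pi_pos).ne'
  rw [erfc, erf, ← h, hhalf]
  field_simp
  ring

lemma erfc_pos (z : ℝ) : 0 < erfc z := by
  have : NeZero (volume.restrict (Ioi z)) := ⟨by simp⟩
  rw [erfc_eq_integral_Ioi]
  have := integral_exp_pos (μ := volume.restrict (Ioi z)) integrable_exp_neg_sq.integrableOn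
  positivity

lemma integral_Ioi_exp_neg_sq_eq (z : ℝ) :
    ∫ s in Ioi z, exp (-s ^ 2) = ∫ t in Ioi 0, exp (-(t + z) ^ 2) := by
  have h := (measurePreserving_add_right volume z).setIntegral_preimage_emb
    (measurableEmbedding_addRight z) (fun s : ℝ => exp (-s ^ 2)) (Ioi z)
  rw [← h]
  congr 1
  ext t
  simp

lemma exp_sq_mul_erfc (z : ℝ) :
    exp (z ^ 2) * erfc z = 2 / √π * ∫ t in Ioi 0, exp (z ^ 2) * exp (-(t + z) ^ 2) := by
  rw [erfc_eq_integral_Ioi, integral_Ioi_exp_neg_sq_eq, integral_const_mul]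
  ring

lemma antitone_exp_sq_mul_erfc : Antitone fun z => exp (z ^ 2) * erfc z := by
  intro x y hxy
  have hint (z : ℝ) : IntegrableOn (fun t => exp (z ^ 2) * exp (-(t + z) ^ 2)) (Ioi 0) :=
    ((integrable_exp_neg_sq.comp_add_right z).const_mul _).integrableOn
  simp only [exp_sq_mul_erfc]
  gcongr 2 / √π * ?_
  refine setIntegral_mono_on (hint y) (hint x) measurableSet_Ioi fun t ht => ?_
  rw [← exp_add, ← exp_add, exp_le_exp]
  nlinarith [mem_Ioi.1 ht]

lemma monotone_exp_neg_sq_div_erfc : Monotone fun z => exp (-z ^ 2) / erfc z := by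
  intro x y hxy
  simp only [exp_neg, div_eq_mul_inv, ← mul_inv]
  gcongr ?_⁻¹
  · exact mul_pos (exp_pos _) (erfc_pos y)
  · exact antitone_exp_sq_mul_erfc hxy

end ErrorFunction

theorem eq_of_strictMonoOn_of_strictAntiOn {α β γ δ : Type*} [LinearOrder α] [LinearOrder β]
    [LinearOrder γ] [LinearOrder δ] {s : Set α} {t : Set β} {h : α → γ} {e : β → γ}
    {Q : α → δ} {V : β → δ} (hh : StrictMonoOn h s) (he : StrictMonoOn e t)
    (hQ : StrictMonoOn Q s) (hV : StrictAntiOn V t) {x₁ y₁ : α} {x₂ y₂ : β}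
    (hx₁ : x₁ ∈ s) (hy₁ : y₁ ∈ s) (hx₂ : x₂ ∈ t) (hy₂ : y₂ ∈ t)
    (hx : e x₂ = h x₁) (hy : e y₂ = h y₁) (hxV : Q x₁ = V x₂) (hyV : Q y₁ = V y₂) :
    x₁ = y₁ ∧ x₂ = y₂ := by
  have h₁ : x₁ = y₁ := by
    by_contra hne
    wlog hlt : x₁ < y₁ generalizing x₁ y₁ x₂ y₂
    · exact this hy₁ hx₁ hy₂ hx₂ hy hx hyV hxV (Ne.symm hne)
        (lt_of_le_of_ne (not_lt.1 hlt) (Ne.symm hne))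
    have h₂ : x₂ < y₂ := (he.lt_iff_lt hx₂ hy₂).1 (hx ▸ hy ▸ hh hx₁ hy₁ hlt)
    have hQlt := hQ hx₁ hy₁ hlt
    have hVlt := hV hx₂ hy₂ h₂
    rw [hxV, hyV] at hQlt
    exact lt_asymm hQlt hVlt
  exact ⟨h₁, he.injOn hx₂ hy₂ (by rw [hx, hy, h₁])⟩

namespace Params

variable (p : Params)

lemma α₁_pos : 0 < p.α₁ := div_pos p.hk₁ (mul_pos p.hρ p.hc₁)
lemma α₂_pos : 0 < p.α₂ := div_pos p.hk₂ (mul_pos p.hρ p.hc₂)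
lemma α₃_pos : 0 < p.α₃ := div_pos p.hk₃ (mul_pos p.hρ p.hc₃)
lemma Ste₁_pos : 0 < p.Ste₁ := div_pos (mul_pos p.hc₁ (sub_pos.mpr p.hCD)) p.hℓ₁
lemma Ste₂_pos : 0 < p.Ste₂ := div_pos (mul_pos p.hc₂ (sub_pos.mpr p.hBC)) p.hℓ₂

lemma φ_strictMono : StrictMono p.φ := by
  refine strictMono_id.add_monotone fun x y hxy => ?_
  simp only [mul_div_assoc]
  have := p.Ste₁_pos
  exact mul_le_mul_of_nonneg_left (monotone_exp_neg_sq_div_erfc hxy) (by positivity)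

lemma φ_pos {z : ℝ} (hz : 0 ≤ z) : 0 < p.φ z := by
  have := p.Ste₁_pos
  have := erfc_pos z
  unfold φ
  positivity

lemma H_strictMonoOn : StrictMonoOn p.H (Ici 0) := by
  intro x hx y _ hxy
  have hx := mem_Ici.1 hx
  have hr := div_pos p.α₁_pos p.α₂_pos
  have := p.Ste₂_pos; have := p.hℓ₁; have := p.hℓ₂
  have := p.φ_pos hx
  have := (p.φ_strictMono hxy).le
  have hexp : exp (-y ^ 2 * (p.α₁ / p.α₂)) / p.φ y ≤ exp (-x ^ 2 * (p.α₁ / p.α₂)) / p.φ x := by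
    gcongr
  have := erf_strictMono (mul_lt_mul_of_pos_right hxy (sqrt_pos.2 hr))
  have := mul_le_mul_of_nonneg_left hexp
    (by positivity : 0 ≤ p.Ste₂ / √π * (p.ℓ₂ / p.ℓ₁) * √(p.k₂ * p.c₁ / (p.k₁ * p.c₂)))
  unfold H
  linarith

lemma Q_strictMonoOn : StrictMonoOn p.Q (Ici 0) := by
  intro x hx y _ hxy
  have hx := mem_Ici.1 hx
  have hr := div_pos p.α₁_pos p.α₂_pos
  have := p.hℓ₁; have := p.hℓ₂
  have := p.φ_pos hx
  have := p.φ_strictMono hxy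
  unfold Q
  gcongr

lemma V_strictAntiOn {A : ℝ} (hA : p.B < A) (hα : p.α₃ < p.α₂) :
    StrictAntiOn (p.V A) (Ioi 0) := by
  intro x hx y _ hxy
  have hx := mem_Ioi.1 hx
  have hr := div_pos p.α₁_pos p.α₂_pos
  have hd : 0 < p.α₁ / p.α₃ - p.α₁ / p.α₂ :=
    sub_pos.2 (div_lt_div_of_pos_left p.α₁_pos p.α₃_pos hα)
  have hb : 0 < √(p.α₁ / p.α₃) := sqrt_pos.2 (div_pos p.α₁_pos p.α₃_pos)
  have := erf_pos (mul_pos hx hb)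
  have := sub_pos.2 hA
  have := p.hℓ₂
  have hquot : exp (-y ^ 2 * (p.α₁ / p.α₃ - p.α₁ / p.α₂)) / erf (y * √(p.α₁ / p.α₃))
      ≤ exp (-x ^ 2 * (p.α₁ / p.α₃ - p.α₁ / p.α₂)) / erf (x * √(p.α₁ / p.α₃)) := by
    gcongr
    exact erf_strictMono.monotone (by gcongr)
  have := mul_le_mul_of_nonneg_left hquot
    (by positivity : 0 ≤ (A - p.B) / p.ℓ₂ * √(p.c₁ * p.c₃ * p.k₃ / (π * p.k₁)))
  have : x * exp (x ^ 2 * (p.α₁ / p.α₂)) < y * exp (y ^ 2 * (p.α₁ / p.α₂)) := by gcongr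
  unfold V
  linarith

lemma V_eq_P (q₀ : ℝ) {z : ℝ} (hz : z ≠ 0) :
    p.V (p.B + (q₀ * √(π * p.α₃) / p.k₃) * erf (z * √(p.α₁ / p.α₃))) z = p.P q₀ z := by
  have hsqrt : √(π * p.α₃) * √(p.c₁ * p.c₃ * p.k₃ / (π * p.k₁))
      = p.k₃ * √(p.c₁ / (p.ρ * p.k₁)) := by
    have := p.hρ.ne'; have := p.hc₃.ne'; have := p.hk₁.ne'; have := pi_pos.ne'
    have hrad : π * p.α₃ * (p.c₁ * p.c₃ * p.k₃ / (π * p.k₁))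
        = p.k₃ ^ 2 * (p.c₁ / (p.ρ * p.k₁)) := by
      unfold α₃
      field_simp
    rw [← sqrt_mul (mul_nonneg pi_pos.le p.α₃_pos.le), hrad, sqrt_mul (sq_nonneg _),
      sqrt_sq p.hk₃.le]
  have hexp : exp (-z ^ 2 * (p.α₁ / p.α₃ - p.α₁ / p.α₂))
      = exp (-z ^ 2 * (p.α₁ / p.α₃)) * exp (z ^ 2 * (p.α₁ / p.α₂)) := by
    rw [← exp_add]; ring_nf
  have := erf_ne_zero (mul_ne_zero hz (sqrt_pos.2 (div_pos p.α₁_pos p.α₃_pos)).ne')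
  have := p.hk₃.ne'; have := p.hℓ₂.ne'
  unfold V P
  rw [hexp, add_sub_cancel_left]
  generalize erf (z * √(p.α₁ / p.α₃)) = e at *
  generalize exp (-z ^ 2 * (p.α₁ / p.α₃)) = E₃
  generalize exp (z ^ 2 * (p.α₁ / p.α₂)) = E₂
  generalize √(π * p.α₃) = s₃ at hsqrt ⊢
  generalize √(p.c₁ * p.c₃ * p.k₃ / (π * p.k₁)) = s at hsqrt ⊢
  generalize √(p.c₁ / (p.ρ * p.k₁)) = s₁ at hsqrt ⊢
  field_simp
  linear_combination (E₂ * q₀ * E₃) * hsqrt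

lemma q2_pos {z₀ : ℝ} (hz₀ : 0 < z₀) : 0 < p.q2 z₀ := by
  have := erf_pos (mul_pos hz₀ (sqrt_pos.2 (div_pos p.α₁_pos p.α₂_pos)))
  have := p.hk₂; have := sub_pos.2 p.hBC; have := p.α₂_pos
  unfold q2
  positivity

lemma pos_of_erf_eq_H {z₀ w₁ w₂ : ℝ} (hz₀ : 0 ≤ z₀) (hH : p.H z₀ = 0) (hw₁ : z₀ < w₁)
    (hw : erf (w₂ * √(p.α₁ / p.α₂)) = p.H w₁) : 0 < w₂ := by
  have : erf 0 < erf (w₂ * √(p.α₁ / p.α₂)) := by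
    rw [hw, erf_zero, ← hH]
    exact p.H_strictMonoOn hz₀ (mem_Ici.2 (hz₀.trans hw₁.le)) hw₁
  exact pos_of_mul_pos_left (erf_strictMono.lt_iff_lt.1 this) (sqrt_nonneg _)

end Params

theorem neumann_to_dirichlet_general (p : Params) (q₀ z₀ lam₁ lam₂ A : ℝ)
    (hα : p.α₃ < p.α₂)
    (hz₀ : 0 < z₀ ∧ p.H z₀ = 0)
    (hq₀ : p.q2 z₀ < q₀)
    (hlam₁ : z₀ < lam₁)
    (herf : erf (lam₂ * Real.sqrt (p.α₁ / p.α₂)) = p.H lam₁)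
    (hsys : p.Q lam₁ = p.P q₀ lam₂)
    (hA : A = p.B + (q₀ * Real.sqrt (Real.pi * p.α₃) / p.k₃) *
      erf (lam₂ * Real.sqrt (p.α₁ / p.α₃))) :
    p.B < A ∧ p.Q lam₁ = p.V A lam₂ ∧
    ∀ μ₁ μ₂ : ℝ, z₀ < μ₁ → 0 ≤ μ₂ →
      erf (μ₂ * Real.sqrt (p.α₁ / p.α₂)) = p.H μ₁ →
      p.Q μ₁ = p.V A μ₂ → μ₁ = lam₁ ∧ μ₂ = lam₂ := by
  obtain ⟨hz₀, hHz₀⟩ := hz₀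
  have hq₀ : 0 < q₀ := (p.q2_pos hz₀).trans hq₀
  have hlam₂ : 0 < lam₂ := p.pos_of_erf_eq_H hz₀.le hHz₀ hlam₁ herf
  have hBA : p.B < A := by
    have := erf_pos (mul_pos hlam₂ (sqrt_pos.2 (div_pos p.α₁_pos p.α₃_pos)))
    have := p.hk₃; have := p.α₃_pos
    rw [hA, lt_add_iff_pos_right]
    positivity
  have hQV : p.Q lam₁ = p.V A lam₂ := by rw [hA, p.V_eq_P q₀ hlam₂.ne', hsys]
  refine ⟨hBA, hQV, fun μ₁ μ₂ hμ₁ _ herfμ hQVμ => ?_⟩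
  have hsub : Ioi z₀ ⊆ Ici 0 := Ioi_subset_Ici_self.trans (Ici_subset_Ici.2 hz₀.le)
  exact eq_of_strictMonoOn_of_strictAntiOn (p.H_strictMonoOn.mono hsub)
    ((erf_strictMono.comp (strictMono_mul_right_of_pos
      (sqrt_pos.2 (div_pos p.α₁_pos p.α₂_pos)))).strictMonoOn (Ioi 0))
    (p.Q_strictMonoOn.mono hsub) (p.V_strictAntiOn hBA hα) hμ₁ hlam₁
    (p.pos_of_erf_eq_H hz₀.le hHz₀ hμ₁ herfμ) hlam₂ herfμ herf hQVμ hQV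

/-- Equivalence Neumann → Dirichlet. -/
theorem neumann_to_dirichlet (p : Params) (q₀ z₀ lam₁ lam₂ A : ℝ)
    (hα : p.α₃ < p.α₂)
    (hz₀ : 0 < z₀ ∧ p.H z₀ = 0)
    (hq₀ : p.q2 z₀ < q₀)
    (hlam₁ : z₀ < lam₁) (hlam₂ : 0 ≤ lam₂)
    (herf : erf (lam₂ * Real.sqrt (p.α₁ / p.α₂)) = p.H lam₁)
    (hsys : p.Q lam₁ = p.P q₀ lam₂)
    (hA : A = p.B + (q₀ * Real.sqrt (Real.pi * p.α₃) / p.k₃) *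
      erf (lam₂ * Real.sqrt (p.α₁ / p.α₃))) :
    p.B < A ∧ p.Q lam₁ = p.V A lam₂ ∧
    ∀ μ₁ μ₂ : ℝ, z₀ < μ₁ → 0 ≤ μ₂ →
      erf (μ₂ * Real.sqrt (p.α₁ / p.α₂)) = p.H μ₁ →
      p.Q μ₁ = p.V A μ₂ → μ₁ = lam₁ ∧ μ₂ = lam₂ :=
  neumann_to_dirichlet_general p q₀ z₀ lam₁ lam₂ A hα hz₀ hq₀ hlam₁ herf hsys hA
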